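/- arXiv:2412.07188 — 2 statements merged into one kernel-verified Lean document; each statement's English description precedes it below -/
import Mathlib

section
/- Let n, k ≥ 1 be integers with k ≥ √n, and let u, v ∈ ℝⁿ be unit vectors (‖u‖₂ = ‖v‖₂ = 1) lying in the same hypercube cell of the k-partition of [−1,1]ⁿ. Then the angle between u and v satisfies ∠(u,v) ≤ 2·arcsin(√n / k) ≤ π·√n / k. -/
open scoped BigOperators

private lemma my_arccos_le_arccos {x y : ℝ} (h : x ≤ y) :
    Real.arccos y ≤ Real.arccos x := by
  rw [Real.arccos_eq_pi_div_two_sub_arcsin, Real.arccos_eq_pi_div_two_sub_arcsin]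
  have := Real.monotone_arcsin h
  linarith

/-- Euclidean norm on `Fin n → ℝ`. -/
noncomputable def norm2 {n : ℕ} (v : Fin n → ℝ) : ℝ := Real.sqrt (∑ i, v i ^ 2)

/-- The angle between two vectors: `arccos(⟨u,v⟩ / (‖u‖₂ ‖v‖₂))`. -/
noncomputable def vangle {n : ℕ} (u v : Fin n → ℝ) : ℝ :=
  Real.arccos ((∑ i, u i * v i) / (norm2 u * norm2 v))

/-- `u` and `v` lie in the same hypercube cell of the `k`-partition of `[-1,1]ⁿ`:
for every coordinate there is a common interval `[-1 + 2c/k, -1 + 2(c+1)/k]`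
containing both entries. -/
def sameCell (n k : ℕ) (u v : Fin n → ℝ) : Prop :=
  ∀ i : Fin n, ∃ c : ℕ, c < k ∧
    u i ∈ Set.Icc (-1 + 2 * (c : ℝ) / k) (-1 + 2 * ((c : ℝ) + 1) / k) ∧
    v i ∈ Set.Icc (-1 + 2 * (c : ℝ) / k) (-1 + 2 * ((c : ℝ) + 1) / k)

/-- Unit vectors in the same hypercube cell of the `k`-partition (with `k ≥ √n`)
form an angle at most `2 arcsin(√n / k) ≤ π √n / k`. -/
theorem angle_le_of_sameCell (n k : ℕ) (hn : 1 ≤ n) (hk : 1 ≤ k)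
    (hkn : Real.sqrt n ≤ (k : ℝ))
    (u v : Fin n → ℝ) (hu : norm2 u = 1) (hv : norm2 v = 1)
    (hcell : sameCell n k u v) :
    vangle u v ≤ 2 * Real.arcsin (Real.sqrt n / k) ∧
      2 * Real.arcsin (Real.sqrt n / k) ≤ Real.pi * Real.sqrt n / k := by
  have hk0 : (0:ℝ) < k := by exact_mod_cast hk
  set t : ℝ := Real.sqrt n / k with ht
  have ht0 : 0 ≤ t := div_nonneg (Real.sqrt_nonneg _) hk0.le
  have ht1 : t ≤ 1 := (div_le_one hk0).2 hkn
  have htsq : t ^ 2 = (n : ℝ) / k ^ 2 := by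
    rw [ht, div_pow, Real.sq_sqrt (by positivity : (0:ℝ) ≤ (n:ℝ))]
  -- sums of squares are 1
  have hu2 : ∑ i, u i ^ 2 = 1 := by
    have := hu; rw [norm2, Real.sqrt_eq_one] at this; exact this
  have hv2 : ∑ i, v i ^ 2 = 1 := by
    have := hv; rw [norm2, Real.sqrt_eq_one] at this; exact this
  -- coordinatewise difference bound
  have hterm : ∀ i : Fin n, (u i - v i) ^ 2 ≤ (2 / k) ^ 2 := by
    intro i
    obtain ⟨c, _, ⟨hu1, hu2'⟩, ⟨hv1, hv2'⟩⟩ := hcell i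
    have h1 : u i - v i ≤ 2 / k := by
      have : 2 * ((c : ℝ) + 1) / k - 2 * (c : ℝ) / k = 2 / k := by
        field_simp; ring
      nlinarith
    have h2 : -(2 / k) ≤ u i - v i := by
      have : 2 * ((c : ℝ) + 1) / k - 2 * (c : ℝ) / k = 2 / k := by
        field_simp; ring
      nlinarith
    exact sq_le_sq' h2 h1
  have hS : ∑ i, (u i - v i) ^ 2 ≤ (n : ℝ) * (2 / k) ^ 2 := by
    calc ∑ i, (u i - v i) ^ 2 ≤ ∑ _i : Fin n, ((2:ℝ) / k) ^ 2 :=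
          Finset.sum_le_sum fun i _ => hterm i
      _ = (n : ℝ) * (2 / k) ^ 2 := by
          rw [Finset.sum_const, Finset.card_univ, Fintype.card_fin, nsmul_eq_mul]
  -- inner product lower bound
  have hip : ∑ i, u i * v i = 1 - (∑ i, (u i - v i) ^ 2) / 2 := by
    have : ∑ i, (u i - v i) ^ 2 = (∑ i, u i ^ 2) + (∑ i, v i ^ 2) - 2 * ∑ i, u i * v i := by
      rw [Finset.mul_sum, ← Finset.sum_add_distrib, ← Finset.sum_sub_distrib]
      exact Finset.sum_congr rfl fun i _ => by ring
    rw [this, hu2, hv2]; ring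
  have hiplb : 1 - 2 * t ^ 2 ≤ ∑ i, u i * v i := by
    rw [hip, htsq]
    have : (n : ℝ) * (2 / k) ^ 2 = 4 * ((n:ℝ) / k ^ 2) := by field_simp; ring
    rw [this] at hS
    linarith
  -- cos of the bound angle
  have hcos : Real.cos (2 * Real.arcsin t) = 1 - 2 * t ^ 2 := by
    rw [Real.cos_two_mul, Real.cos_arcsin,
      Real.sq_sqrt (by nlinarith : (0:ℝ) ≤ 1 - t ^ 2)]
    ring
  have harcsin_mem : Real.arcsin t ∈ Set.Icc 0 (Real.pi / 2) :=
    ⟨Real.arcsin_nonneg.2 ht0, Real.arcsin_le_pi_div_two t⟩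
  constructor
  · rw [vangle, hu, hv, one_mul, div_one]
    have h2a : 2 * Real.arcsin t = Real.arccos (Real.cos (2 * Real.arcsin t)) := by
      rw [Real.arccos_cos (by linarith [harcsin_mem.1]) (by linarith [harcsin_mem.2])]
    rw [h2a, hcos]
    exact my_arccos_le_arccos hiplb
  · have h := Real.mul_le_sin harcsin_mem.1 harcsin_mem.2
    rw [Real.sin_arcsin (by linarith) ht1] at h
    have hpi : 0 < Real.pi := Real.pi_pos
    have key : 2 * Real.arcsin t ≤ Real.pi * t := by
      have h2 := mul_le_mul_of_nonneg_left h hpi.le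
      calc 2 * Real.arcsin t = Real.pi * (2 / Real.pi * Real.arcsin t) := by
            field_simp
        _ ≤ Real.pi * t := h2
    rw [ht] at key
    rwa [mul_div_assoc]
end

section
/- Let n, k ≥ 1 be integers, let A ∈ ℝ^{n×n} be an orthogonal matrix (AᵀA = I), and let u, v ∈ ℝⁿ be unit vectors (‖u‖₂ = ‖v‖₂ = 1) lying in the same hypercube cell of the k-partition of [−1,1]ⁿ. Then the energy distributions of u and v satisfy ‖e(u) − e(v)‖₂ ≤ 2·(4n/k²)^{1/2} = 4√n / k. In particular, the deviation in energy distribution caused by discretizing a unit eigenvector into node class labels is at most 4√n / k. -/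
open scoped BigOperators
open Matrix

/-- Energy distribution function `e(v) = ((Av) ⊙ (Av)) / ‖Av‖₂²`. -/
noncomputable def energy {n : ℕ} (A : Matrix (Fin n) (Fin n) ℝ) (v : Fin n → ℝ) :
    Fin n → ℝ :=
  fun i => (A.mulVec v i) * (A.mulVec v i) / (norm2 (A.mulVec v)) ^ 2

/-- For unit vectors `u`, `v` in the same hypercube cell and orthogonal `A`, the
energy distributions deviate by at most `2 (4n/k²)^(1/2) = 4√n / k`. -/
theorem energy_variance_bound (n k : ℕ) (hn : 1 ≤ n) (hk : 1 ≤ k)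
    (A : Matrix (Fin n) (Fin n) ℝ) (hA : Aᵀ * A = 1)
    (u v : Fin n → ℝ) (hu : norm2 u = 1) (hv : norm2 v = 1)
    (hcell : sameCell n k u v) :
    norm2 (fun i => energy A u i - energy A v i) ≤
        2 * (4 * (n : ℝ) / (k : ℝ) ^ 2) ^ ((1 : ℝ) / 2) ∧
      2 * (4 * (n : ℝ) / (k : ℝ) ^ 2) ^ ((1 : ℝ) / 2) =
        4 * Real.sqrt n / k := by
  have hk0 : (0:ℝ) < k := by exact_mod_cast hk
  have hn0 : (0:ℝ) ≤ n := Nat.cast_nonneg n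
  have hsn : Real.sqrt n ^ 2 = n := Real.sq_sqrt hn0
  have hsn0 : (0:ℝ) ≤ Real.sqrt n := Real.sqrt_nonneg n
  -- orthogonality preserves sums of squares
  have key : ∀ w : Fin n → ℝ, ∑ i, (A.mulVec w i) ^ 2 = ∑ i, w i ^ 2 := by
    intro w
    have h : (A *ᵥ w) ⬝ᵥ (A *ᵥ w) = w ⬝ᵥ w := by
      rw [Matrix.dotProduct_mulVec, ← Matrix.mulVec_transpose, Matrix.mulVec_mulVec, hA,
        Matrix.one_mulVec]
    simpa [dotProduct, sq] using h
  set a := A.mulVec u with ha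
  set b := A.mulVec v with hb
  have hsa : ∑ i, a i ^ 2 = 1 := by
    have := key u
    have hu2 : ∑ i, u i ^ 2 = 1 := by
      have h := Real.sq_sqrt (Finset.sum_nonneg fun i (_ : i ∈ Finset.univ) => sq_nonneg (u i))
      rw [show Real.sqrt (∑ i, u i ^ 2) = 1 from hu] at h
      simpa using h.symm
    rw [ha, this, hu2]
  have hsb : ∑ i, b i ^ 2 = 1 := by
    have := key v
    have hv2 : ∑ i, v i ^ 2 = 1 := by
      have h := Real.sq_sqrt (Finset.sum_nonneg fun i (_ : i ∈ Finset.univ) => sq_nonneg (v i))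
      rw [show Real.sqrt (∑ i, v i ^ 2) = 1 from hv] at h
      simpa using h.symm
    rw [hb, this, hv2]
  have hna : norm2 a = 1 := by
    rw [norm2, hsa, Real.sqrt_one]
  have hnb : norm2 b = 1 := by
    rw [norm2, hsb, Real.sqrt_one]
  have hea : ∀ i, energy A u i = a i ^ 2 := by
    intro i; rw [energy, ← ha, hna]; ring
  have heb : ∀ i, energy A v i = b i ^ 2 := by
    intro i; rw [energy, ← hb, hnb]; ring
  -- coordinatewise bound from the cell condition
  have hdiff : ∀ i, (u i - v i) ^ 2 ≤ (2 / k) ^ 2 := by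
    intro i
    obtain ⟨c, _, ⟨hu1, hu2⟩, ⟨hv1, hv2⟩⟩ := hcell i
    have hlen : (-1 + 2 * ((c : ℝ) + 1) / k) - (-1 + 2 * (c : ℝ) / k) = 2 / k := by
      field_simp; ring
    have h2k : (0:ℝ) ≤ 2 / k := by positivity
    apply sq_le_sq'
    · linarith
    · linarith
  have hS : ∑ i, (u i - v i) ^ 2 ≤ 4 * n / k ^ 2 := by
    calc ∑ i, (u i - v i) ^ 2 ≤ ∑ _i : Fin n, (2 / (k:ℝ)) ^ 2 :=
          Finset.sum_le_sum fun i _ => hdiff i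
      _ = n * (2 / k) ^ 2 := by rw [Finset.sum_const]; simp [mul_comm]
      _ = 4 * n / k ^ 2 := by field_simp; ring
  have hab : ∑ i, (a i - b i) ^ 2 ≤ 4 * n / k ^ 2 := by
    have : ∀ i, a i - b i = A.mulVec (u - v) i := by
      intro i; rw [ha, hb, Matrix.mulVec_sub]; rfl
    calc ∑ i, (a i - b i) ^ 2 = ∑ i, (A.mulVec (u - v) i) ^ 2 := by
          exact Finset.sum_congr rfl fun i _ => by rw [this i]
      _ = ∑ i, (u i - v i) ^ 2 := by
          rw [key (u - v)]; exact Finset.sum_congr rfl fun i _ => by simp [Pi.sub_apply]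
      _ ≤ 4 * n / k ^ 2 := hS
  -- bound (a i + b i)^2 by the full sum, which is at most 4
  have hplus : ∀ i, (a i + b i) ^ 2 ≤ 4 := by
    intro i
    have h1 : (a i + b i) ^ 2 ≤ 2 * a i ^ 2 + 2 * b i ^ 2 := by nlinarith [sq_nonneg (a i - b i)]
    have h2 : a i ^ 2 ≤ 1 := by
      have h := Finset.single_le_sum (f := fun j => a j ^ 2) (fun j _ => sq_nonneg (a j))
        (Finset.mem_univ i)
      simpa [hsa] using h
    have h3 : b i ^ 2 ≤ 1 := by
      have h := Finset.single_le_sum (f := fun j => b j ^ 2) (fun j _ => sq_nonneg (b j))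
        (Finset.mem_univ i)
      simpa [hsb] using h
    linarith
  have hmain : ∑ i, (a i ^ 2 - b i ^ 2) ^ 2 ≤ 16 * n / k ^ 2 := by
    have hterm : ∀ i, (a i ^ 2 - b i ^ 2) ^ 2 ≤ 4 * (a i - b i) ^ 2 := by
      intro i
      have : (a i ^ 2 - b i ^ 2) ^ 2 = (a i - b i) ^ 2 * (a i + b i) ^ 2 := by ring
      rw [this]
      have := hplus i
      nlinarith [sq_nonneg (a i - b i)]
    calc ∑ i, (a i ^ 2 - b i ^ 2) ^ 2 ≤ ∑ i, 4 * (a i - b i) ^ 2 :=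
          Finset.sum_le_sum fun i _ => hterm i
      _ = 4 * ∑ i, (a i - b i) ^ 2 := by rw [Finset.mul_sum]
      _ ≤ 4 * (4 * n / k ^ 2) := by linarith
      _ = 16 * n / k ^ 2 := by ring
  -- the equality part
  have heq : 2 * (4 * (n : ℝ) / (k : ℝ) ^ 2) ^ ((1 : ℝ) / 2) = 4 * Real.sqrt n / k := by
    rw [← Real.sqrt_eq_rpow]
    have h4 : 4 * (n:ℝ) / k ^ 2 = (2 * Real.sqrt n / k) ^ 2 := by
      rw [div_pow, mul_pow, hsn]; norm_num
    rw [h4, Real.sqrt_sq (by positivity)]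
    ring
  constructor
  · rw [heq]
    have hrw : norm2 (fun i => energy A u i - energy A v i) =
        Real.sqrt (∑ i, (a i ^ 2 - b i ^ 2) ^ 2) := by
      rw [norm2]
      congr 1
      exact Finset.sum_congr rfl fun i _ => by rw [hea i, heb i]
    rw [hrw]
    have h4 : (16:ℝ) * n / k ^ 2 = (4 * Real.sqrt n / k) ^ 2 := by
      rw [div_pow, mul_pow, hsn]; norm_num
    calc Real.sqrt (∑ i, (a i ^ 2 - b i ^ 2) ^ 2) ≤ Real.sqrt (16 * n / k ^ 2) :=
          Real.sqrt_le_sqrt hmain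
      _ = 4 * Real.sqrt n / k := by rw [h4, Real.sqrt_sq (by positivity)]
  · exact heq
end
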